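/- arXiv:2412.15608 — 2 statements merged into one kernel-verified Lean document; each statement's English description precedes it below -/
import Mathlib

section
/- Let V : D × Ξ → ℝ with D, Ξ nonempty finite sets. The inner-loop procedure, which starting from a nonempty Ξ₀ ⊆ Ξ repeatedly computes λₙ ∈ argmax_λ min_{r ∈ Ξₙ} V(λ, r), rₙ ∈ argmin_r V(λₙ, r), and sets Ξₙ₊₁ = Ξₙ ∪ {rₙ}, terminates with min_{r ∈ Ξₙ} V(λₙ, r) = max_λ min_{r ∈ Ξ} V(λ, r) after at most |Ξ| iterations. -/
/-!
Every iteration that does not stop adds a new point of `Ξ` to `Ξₙ`, so by pigeonhole some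
`rₙ` with `n ≤ |Ξ|` already lies in `Ξₙ`. At that iterate the relaxation is exact: since
`Ξₙ ⊆ Ξ`, each `min_{Ξₙ} V(λ, ·)` dominates `min_Ξ V(λ, ·)`, while for `λₙ` the minimum over
`Ξₙ` is attained at the global minimiser `rₙ`, so the relaxed max-min is sandwiched between
`min_Ξ V(λₙ, ·)` and the true max-min.
-/

namespace Finset

variable {α : Type*} [DecidableEq α]

lemma subset_of_insert_succ {s : ℕ → Finset α} {t : Finset α} {f : ℕ → α}
    (h₀ : s 0 ⊆ t) (hf : ∀ n, f n ∈ t) (hs : ∀ n, s (n + 1) = insert (f n) (s n)) (n : ℕ) :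
    s n ⊆ t := by
  induction n with
  | zero => exact h₀
  | succ n ih => exact hs n ▸ insert_subset (hf n) ih

lemma exists_le_card_mem_of_insert_succ {s : ℕ → Finset α} {t : Finset α} {f : ℕ → α}
    (hst : ∀ n, s n ⊆ t) (hs : ∀ n, s (n + 1) = insert (f n) (s n)) :
    ∃ n ≤ t.card, f n ∈ s n := by
  by_contra! hnew
  have hgrow : ∀ n ≤ t.card + 1, n ≤ (s n).card := by
    intro n hn
    induction n with
    | zero => exact Nat.zero_le _
    | succ n ih =>
      rw [hs n, card_insert_of_notMem (hnew n (by omega))]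
      exact Nat.succ_le_succ (ih (by omega))
  have := (hgrow _ le_rfl).trans (card_le_card (hst (t.card + 1)))
  omega

variable {Λ R β : Type*} [LinearOrder β]

lemma inf'_eq_sup'_inf'_of_mem {V : Λ → R → β} {D : Finset Λ} {S T : Finset R}
    (hD : D.Nonempty) (hS : S.Nonempty) (hT : T.Nonempty) (hST : S ⊆ T) {l : Λ} (hl : l ∈ D)
    (hl_max : S.inf' hS (V l) = D.sup' hD fun l' => S.inf' hS (V l'))
    {x : R} (hx : x ∈ S) (hx_min : V l x = T.inf' hT (V l)) :
    S.inf' hS (V l) = D.sup' hD fun l' => T.inf' hT (V l') := by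
  apply le_antisymm
  · calc S.inf' hS (V l) ≤ V l x := inf'_le _ hx
      _ = T.inf' hT (V l) := hx_min
      _ ≤ D.sup' hD fun l' => T.inf' hT (V l') := le_sup' (fun l' => T.inf' hT (V l')) hl
  · rw [hl_max]
    exact sup'_mono_fun fun _ _ => inf'_mono _ hST hS

end Finset

/-- Proposition 1: the inner column-and-constraint generation loop terminates,
within at most `|Ξ|` iterations, at an iterate where the relaxed value
`min_{r ∈ Ξₙ} V(λₙ, r)` equals the exact max-min value
`max_{λ ∈ D} min_{r ∈ Ξ} V(λ, r)`; termination means the newly generated point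
`rₙ` already lies in `Ξₙ` (or `Ξₙ = Ξ`). -/
theorem stmt_10 {Λ R : Type*} [DecidableEq R] (D : Finset Λ) (Ξ : Finset R)
    (hD : D.Nonempty) (hΞ : Ξ.Nonempty) (V : Λ → R → ℝ)
    (Ξseq : ℕ → Finset R) (lam : ℕ → Λ) (r : ℕ → R)
    (hsub0 : Ξseq 0 ⊆ Ξ) (hne : ∀ n, (Ξseq n).Nonempty)
    (hstep : ∀ n, Ξseq (n + 1) = Ξseq n ∪ {r n})
    (hlam : ∀ n, lam n ∈ D ∧
      (Ξseq n).inf' (hne n) (V (lam n))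
        = D.sup' hD (fun l => (Ξseq n).inf' (hne n) (V l)))
    (hr : ∀ n, r n ∈ Ξ ∧ V (lam n) (r n) = Ξ.inf' hΞ (V (lam n))) :
    ∃ n ≤ Ξ.card, (r n ∈ Ξseq n ∨ Ξseq n = Ξ) ∧
      (Ξseq n).inf' (hne n) (V (lam n))
        = D.sup' hD (fun l => Ξ.inf' hΞ (V l)) := by
  have hinsert : ∀ n, Ξseq (n + 1) = insert (r n) (Ξseq n) := fun n => by
    rw [hstep n, Finset.union_comm, Finset.insert_eq]
  have hsub : ∀ n, Ξseq n ⊆ Ξ :=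
    Finset.subset_of_insert_succ hsub0 (fun n => (hr n).1) hinsert
  obtain ⟨n, hn, hrn⟩ := Finset.exists_le_card_mem_of_insert_succ hsub hinsert
  exact ⟨n, hn, Or.inl hrn, Finset.inf'_eq_sup'_inf'_of_mem hD (hne n) hΞ (hsub n)
    (hlam n).1 (hlam n).2 hrn (hr n).2⟩
end

section
/- Let OPT = min_{s ∈ S} [c(s) + max_{λ ∈ D} Q(s, λ)] with S, D nonempty finite sets and Q : S × D → ℝ. The outer loop that maintains D' ⊆ D, computes s* ∈ argmin_{s} [c(s) + max_{λ ∈ D'} Q(s, λ)] (with max over empty D' taken as 0 ≤ min Q values appropriately, or D' initialized nonempty), then λ* ∈ argmax_{λ ∈ D} Q(s*, λ), and adds λ* to D', terminates with the relaxed value equal to OPT after at most |D| iterations, where termination occurs when λ* ∈ D'. -/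
/-!
Every iteration either repeats a scenario or adds a new element of `D` to `D'`, so a repetition
must occur within `|D|` iterations. The relaxed master value is always a lower bound for `OPT`,
since maximising over `D' ⊆ D` underestimates the worst case. When the scenario `λₙ` maximising
`Q(sₙ, ·)` over `D` already lies in `D'`, the relaxed worst case at `sₙ` is the true worst case,
so the relaxed value is also attained by the true objective at `sₙ` and hence is at least `OPT`.
-/

namespace Finset

variable {α β : Type*}

theorem sup'_eq_sup'_of_subset_of_mem [LinearOrder β] {s t : Finset α} (f : α → β)
    (hs : s.Nonempty) (ht : t.Nonempty) (hst : s ⊆ t) {a : α} (ha : a ∈ s)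
    (hfa : f a = t.sup' ht f) : s.sup' hs f = t.sup' ht f :=
  le_antisymm (sup'_mono f hst hs) (hfa ▸ le_sup' f ha)

theorem eq_inf'_univ_of_forall_le [Fintype α] [Nonempty α] [LinearOrder β] {f g : α → β} {x : α}
    (hmin : ∀ y, f x ≤ f y) (hfg : ∀ y, f y ≤ g y) (hgx : g x ≤ f x) :
    f x = univ.inf' univ_nonempty g :=
  le_antisymm (le_inf' _ _ fun y _ => (hmin y).trans (hfg y)) (inf'_le_of_le g (mem_univ x) hgx)

end Finset

section InsertionSequence

open Finset

variable {Λ : Type*} [DecidableEq Λ] {Dseq : ℕ → Finset Λ} {lam : ℕ → Λ}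

theorem subset_of_union_singleton_of_mem {D : Finset Λ} (hsub0 : Dseq 0 ⊆ D)
    (hstep : ∀ n, Dseq (n + 1) = Dseq n ∪ {lam n}) (hlam : ∀ n, lam n ∈ D) (n : ℕ) :
    Dseq n ⊆ D := by
  induction n with
  | zero => exact hsub0
  | succ k ih => rw [hstep k]; exact union_subset ih (singleton_subset_iff.mpr (hlam k))

theorem card_add_eq_card_of_forall_notMem (hstep : ∀ n, Dseq (n + 1) = Dseq n ∪ {lam n})
    {n : ℕ} (hnew : ∀ k < n, lam k ∉ Dseq k) : #(Dseq 0) + n = #(Dseq n) := by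
  induction n with
  | zero => rfl
  | succ k ih =>
    rw [hstep k, union_comm, ← insert_eq, card_insert_of_notMem (hnew k k.lt_succ_self),
      ← ih fun j hj => hnew j (hj.trans k.lt_succ_self), add_assoc]

theorem exists_le_card_mem_of_subset {D : Finset Λ}
    (hstep : ∀ n, Dseq (n + 1) = Dseq n ∪ {lam n}) (hsub : ∀ n, Dseq n ⊆ D) :
    ∃ n ≤ #D, lam n ∈ Dseq n := by
  by_contra! hnew
  have hcard := card_add_eq_card_of_forall_notMem hstep (n := #D + 1)
    fun k hk => hnew k (Nat.le_of_lt_succ hk)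
  have := card_le_card (hsub (#D + 1))
  omega

end InsertionSequence

/-- Proposition 2: the outer column-and-constraint generation loop of the ROD
algorithm terminates, within at most `|D|` iterations, at an iterate where the
scenario produced by the subproblem repeats (`λₙ ∈ Dₙ`) and the relaxed master
value equals the exact robust optimum `OPT`. -/
theorem stmt_19 {S Λ : Type*} [Fintype S] [Nonempty S] [DecidableEq Λ]
    (D : Finset Λ) (hD : D.Nonempty) (c : S → ℝ) (Q : S → Λ → ℝ)
    (Dseq : ℕ → Finset Λ) (s : ℕ → S) (lam : ℕ → Λ)
    (hsub0 : Dseq 0 ⊆ D) (hne : ∀ n, (Dseq n).Nonempty)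
    (hstep : ∀ n, Dseq (n + 1) = Dseq n ∪ {lam n})
    (hs : ∀ n, ∀ s' : S,
      c (s n) + (Dseq n).sup' (hne n) (Q (s n))
        ≤ c s' + (Dseq n).sup' (hne n) (Q s'))
    (hlam : ∀ n, lam n ∈ D ∧
      Q (s n) (lam n) = D.sup' hD (Q (s n))) :
    ∃ n ≤ D.card, lam n ∈ Dseq n ∧
      c (s n) + (Dseq n).sup' (hne n) (Q (s n))
        = Finset.univ.inf' Finset.univ_nonempty
            (fun s' => c s' + D.sup' hD (Q s')) := by
  have hsub := subset_of_union_singleton_of_mem hsub0 hstep fun n => (hlam n).1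
  obtain ⟨n, hn, hrepeat⟩ := exists_le_card_mem_of_subset hstep hsub
  refine ⟨n, hn, hrepeat, Finset.eq_inf'_univ_of_forall_le
    (f := fun s' => c s' + (Dseq n).sup' (hne n) (Q s')) (hs n) (fun s' => ?_) ?_⟩
  · exact add_le_add_right (Finset.sup'_mono (Q s') (hsub n) (hne n)) (c s')
  · exact (congrArg (c (s n) + ·)
      (Finset.sup'_eq_sup'_of_subset_of_mem (Q (s n)) (hne n) hD (hsub n) hrepeat (hlam n).2)).ge
end
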